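/- Under the straightening hypothesis, multiplication by a fixed nonzero element strictly preserves the order of leading exponents of basis monomials: for every nonzero u ∈ A (with |u| defined as the largest exponent in its basis expansion) and all m, m' ∈ O with m < m', the products u·M(m), u·M(m'), M(m)·u, M(m')·u are nonzero, |u·M(m)| < |u·M(m')|, and |M(m)·u| < |M(m')·u|. (Abstract content of Proposition 3.4 of the paper.) -/

import Mathlib

/-!
The order on exponents is Mathlib's colexicographic order on `Colex (I →₀ ℕ)`, a well-founded
ordered cancellative monoid. The heart of the matter is that the product of the letters of any
word in the `a i` has leading exponent equal to the content of the word. This goes by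
well-founded induction on (content, number of inversions `i < j` with `i` before `j`): at an
adjacent inversion the straightening relation trades the word for `ξ` times the word with
`i, j` swapped, which has one inversion fewer, plus words of strictly smaller content. So
leading exponents add on products of basis monomials, and by bilinearity `|x y| = |x| + |y|`
for all nonzero `x, y`; in particular `|u M(m)| = |u| + m` and `|M(m) u| = m + |u|`, and
adding `|u|` is strictly monotone.
-/

open scoped BigOperators

/-- The ordered monomial `∏ a_i ^ m i`, the product taken over the support of
`m` in strictly decreasing order of the index `i`. -/
noncomputable def ordMon {I : Type*} [LinearOrder I] {A : Type*} [Ring A]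
    (a : I → A) (m : I →₀ ℕ) : A :=
  ((m.support.sort (· ≤ ·)).reverse.map (fun i => a i ^ m i)).prod

/-- The total order on `O = (I →₀ ℕ)`: `m < n` iff at the largest index `j`
where `m` and `n` differ one has `m j < n j`. -/
def leadLT {I : Type*} [LinearOrder I] (m n : I →₀ ℕ) : Prop :=
  ∃ j, m j < n j ∧ ∀ i, j < i → m i = n i

/-- `μ` is the leading exponent `|x|` of `x`: the largest element of `O`
whose basis monomial occurs with nonzero coefficient in the expansion of `x`
with respect to the basis `B` of monomials. -/
def isLead {I K A : Type*} [LinearOrder I] [Field K] [Ring A] [Algebra K A]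
    (B : Module.Basis (I →₀ ℕ) K A) (x : A) (μ : I →₀ ℕ) : Prop :=
  B.repr x μ ≠ 0 ∧ ∀ ν, B.repr x ν ≠ 0 → ν = μ ∨ leadLT ν μ

open Finsupp Set

theorem leadLT_iff_toColex_lt {I : Type*} [LinearOrder I] {m n : I →₀ ℕ} :
    leadLT m n ↔ toColex m < toColex n := by
  rw [Finsupp.Colex.lt_iff]
  exact exists_congr fun _ => and_comm

section LeadingExponent

variable {I K A : Type*} [Field K] [Ring A] [Algebra K A] (B : Module.Basis (I →₀ ℕ) K A)

def monomialSpan (s : Set (Colex (I →₀ ℕ))) : Submodule K A :=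
  Submodule.span K (B '' (toColex ⁻¹' s))

variable {B}

theorem mem_monomialSpan {s : Set (Colex (I →₀ ℕ))} {x : A} :
    x ∈ monomialSpan B s ↔ ∀ ν, B.repr x ν ≠ 0 → toColex ν ∈ s := by
  simp only [monomialSpan, Module.Basis.mem_span_image, Set.subset_def, Finset.mem_coe,
    Finsupp.mem_support_iff, Set.mem_preimage]

theorem monomialSpan_mono {s t : Set (Colex (I →₀ ℕ))} (h : s ⊆ t) :
    monomialSpan B s ≤ monomialSpan B t :=
  Submodule.span_mono (image_mono (preimage_mono h))

variable [LinearOrder I]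

theorem isLead_iff {x : A} {μ : I →₀ ℕ} :
    isLead B x μ ↔ B.repr x μ ≠ 0 ∧ x ∈ monomialSpan B (Iic (toColex μ)) := by
  simp only [isLead, mem_monomialSpan, mem_Iic, le_iff_eq_or_lt, toColex_inj,
    leadLT_iff_toColex_lt]

theorem isLead_iff_exists_sub_smul_mem {x : A} {μ : I →₀ ℕ} :
    isLead B x μ ↔ ∃ c ≠ (0 : K), x - c • B μ ∈ monomialSpan B (Iio (toColex μ)) := by
  simp only [isLead_iff, mem_monomialSpan, mem_Iic, mem_Iio, map_sub, map_smul,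
    Module.Basis.repr_self, Finsupp.sub_apply, Finsupp.smul_apply, smul_eq_mul]
  constructor
  · rintro ⟨hμ, hle⟩
    refine ⟨B.repr x μ, hμ, fun ν hν => ?_⟩
    rcases eq_or_ne ν μ with rfl | hne
    · simp at hν
    · rw [Finsupp.single_eq_of_ne hne, mul_zero, sub_zero] at hν
      exact (hle ν hν).lt_of_ne (toColex_inj.not.mpr hne)
  · rintro ⟨c, hc, hlt⟩
    have hμ : B.repr x μ = c := by
      by_contra hne
      refine lt_irrefl (toColex μ) (hlt μ ?_)
      simpa [sub_eq_zero] using hne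
    refine ⟨hμ ▸ hc, fun ν hν => ?_⟩
    rcases eq_or_ne ν μ with rfl | hne
    · exact le_rfl
    · refine (hlt ν ?_).le
      rwa [Finsupp.single_eq_of_ne hne, mul_zero, sub_zero]

theorem isLead_self (μ : I →₀ ℕ) : isLead B (B μ) μ :=
  isLead_iff_exists_sub_smul_mem.mpr ⟨1, one_ne_zero, by simp⟩

theorem isLead.ne_zero {x : A} {μ : I →₀ ℕ} (h : isLead B x μ) : x ≠ 0 := by
  rintro rfl
  exact h.1 (by simp)

theorem exists_isLead {x : A} (hx : x ≠ 0) : ∃ μ, isLead B x μ := by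
  have hsupp : (B.repr x).support.Nonempty := by simpa using hx
  obtain ⟨μ, hμ, hmax⟩ := (B.repr x).support.exists_max_image toColex hsupp
  refine ⟨μ, isLead_iff.mpr ⟨Finsupp.mem_support_iff.mp hμ, mem_monomialSpan.mpr ?_⟩⟩
  exact fun ν hν => hmax ν (Finsupp.mem_support_iff.mpr hν)

theorem isLead.mem_monomialSpan_Iio {x : A} {μ : I →₀ ℕ} (h : isLead B x μ)
    {κ : Colex (I →₀ ℕ)} (hμκ : toColex μ < κ) : x ∈ monomialSpan B (Iio κ) :=
  monomialSpan_mono (Iic_subset_Iio.mpr hμκ) (isLead_iff.mp h).2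

theorem isLead.smul_add {x r : A} {μ : I →₀ ℕ} (h : isLead B x μ) {ξ : K} (hξ : ξ ≠ 0)
    (hr : r ∈ monomialSpan B (Iio (toColex μ))) : isLead B (ξ • x + r) μ := by
  obtain ⟨c, hc, hx⟩ := isLead_iff_exists_sub_smul_mem.mp h
  refine isLead_iff_exists_sub_smul_mem.mpr ⟨ξ * c, mul_ne_zero hξ hc, ?_⟩
  have : ξ • x + r - (ξ * c) • B μ = ξ • (x - c • B μ) + r := by
    rw [smul_sub, mul_smul]; abel
  rw [this]
  exact add_mem (Submodule.smul_mem _ _ hx) hr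

theorem mul_mem_monomialSpan_Iio (hmul : ∀ α β, isLead B (B α * B β) (α + β))
    {s t : Set (Colex (I →₀ ℕ))} {κ : Colex (I →₀ ℕ)}
    (hst : ∀ α β, toColex α ∈ s → toColex β ∈ t → toColex (α + β) < κ)
    {x y : A} (hx : x ∈ monomialSpan B s) (hy : y ∈ monomialSpan B t) :
    x * y ∈ monomialSpan B (Iio κ) := by
  have hxy := Submodule.mul_mem_mul hx hy
  rw [monomialSpan, monomialSpan, Submodule.span_mul_span] at hxy
  refine Submodule.span_le.mpr ?_ hxy
  rintro _ ⟨_, ⟨α, hα, rfl⟩, _, ⟨β, hβ, rfl⟩, rfl⟩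
  exact (hmul α β).mem_monomialSpan_Iio (hst α β hα hβ)

theorem isLead.mul (hmul : ∀ α β, isLead B (B α * B β) (α + β))
    {x y : A} {μ ν : I →₀ ℕ}
    (hx : isLead B x μ) (hy : isLead B y ν) : isLead B (x * y) (μ + ν) := by
  obtain ⟨c, hc, hxc⟩ := isLead_iff_exists_sub_smul_mem.mp hx
  obtain ⟨d, hd, hyd⟩ := isLead_iff_exists_sub_smul_mem.mp hy
  have hx_tail : (x - c • B μ) * y ∈ monomialSpan B (Iio (toColex (μ + ν))) :=
    mul_mem_monomialSpan_Iio hmul (fun α β hα hβ => add_lt_add_of_lt_of_le hα hβ) hxc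
      (isLead_iff.mp hy).2
  have hy_tail : B μ * (y - d • B ν) ∈ monomialSpan B (Iio (toColex (μ + ν))) :=
    mul_mem_monomialSpan_Iio hmul (fun α β hα hβ => add_lt_add_of_le_of_lt hα hβ)
      (isLead_iff.mp (isLead_self μ)).2 hyd
  have hsplit : x * y =
      (c * d) • (B μ * B ν) + ((x - c • B μ) * y + c • (B μ * (y - d • B ν))) := by
    simp only [sub_mul, mul_sub, smul_mul_assoc, mul_smul_comm, smul_sub, mul_smul]
    abel
  rw [hsplit]
  exact (hmul μ ν).smul_add (mul_ne_zero hc hd)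
    (add_mem hx_tail (Submodule.smul_mem _ _ hy_tail))

end LeadingExponent

section Words

variable {I : Type*} [LinearOrder I]

theorem toFinsupp_coe_append (l₁ l₂ : List I) :
    Multiset.toFinsupp ((l₁ ++ l₂ : List I) : Multiset I) =
      Multiset.toFinsupp (l₁ : Multiset I) + Multiset.toFinsupp (l₂ : Multiset I) := by
  rw [← Multiset.coe_add, map_add]

theorem toColex_toFinsupp_append_lt (p s : List I) {w w' : List I}
    (h : toColex (Multiset.toFinsupp (w : Multiset I)) <
      toColex (Multiset.toFinsupp (w' : Multiset I))) :
    toColex (Multiset.toFinsupp ((p ++ w ++ s : List I) : Multiset I)) <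
      toColex (Multiset.toFinsupp ((p ++ w' ++ s : List I) : Multiset I)) := by
  simp only [toFinsupp_coe_append, toColex_add]
  exact add_lt_add_left (add_lt_add_right h _) _

def wordOf (n : I →₀ ℕ) : List I :=
  (n.support.sort (· ≤ ·)).reverse.flatMap fun i => List.replicate (n i) i

theorem coe_wordOf (n : I →₀ ℕ) : (wordOf n : Multiset I) = toMultiset n := by
  rw [wordOf, ← Multiset.coe_bind, Multiset.coe_reverse, Finset.sort_eq, toMultiset_apply,
    Finsupp.sum, Finset.sum_eq_multiset_sum, Multiset.bind]
  simp only [Multiset.nsmul_singleton, Multiset.coe_replicate]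
  rfl

theorem toFinsupp_wordOf (n : I →₀ ℕ) : Multiset.toFinsupp (wordOf n : Multiset I) = n := by
  rw [coe_wordOf, toMultiset_toFinsupp]

theorem sortedGE_wordOf (n : I →₀ ℕ) : (wordOf n).SortedGE := by
  rw [List.sortedGE_iff_pairwise, wordOf, List.pairwise_flatMap]
  refine ⟨fun i _ => List.pairwise_replicate.mpr (Or.inr le_rfl), ?_⟩
  refine (List.sortedGT_reverse.mpr n.support.sortedLT_sort).pairwise.imp ?_
  intro i j hij x hx y hy
  rw [List.eq_of_mem_replicate hx, List.eq_of_mem_replicate hy]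
  exact hij.le

theorem eq_wordOf_of_sortedGE {l : List I} (hl : l.SortedGE) :
    l = wordOf (Multiset.toFinsupp (l : Multiset I)) := by
  refine List.Perm.eq_of_sortedGE hl (sortedGE_wordOf _) (Multiset.coe_eq_coe.mp ?_)
  rw [coe_wordOf, Multiset.toFinsupp_toMultiset]

theorem prod_map_wordOf {A : Type*} [Ring A] (a : I → A) (n : I →₀ ℕ) :
    ((wordOf n).map a).prod = ordMon a n := by
  simp [wordOf, ordMon, List.flatMap, List.prod_flatten, Function.comp_def]

end Words

section Inversions

variable {I : Type*} [LinearOrder I]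

def invCount : List I → ℕ
  | [] => 0
  | x :: xs => xs.countP (fun y => x < y) + invCount xs

theorem invCount_swap (p s : List I) {i j : I} (hij : i < j) :
    invCount (p ++ j :: i :: s) < invCount (p ++ i :: j :: s) := by
  induction p with
  | nil =>
    simp only [List.nil_append, invCount, List.countP_cons]
    simp [hij, hij.not_gt]
    omega
  | cons x t ih =>
    simp only [List.cons_append, invCount,
      ((List.Perm.swap i j s).append_left t).countP_eq]
    omega

theorem exists_eq_append_cons_cons_lt_of_not_sortedGE {l : List I} (hl : ¬ l.SortedGE) :
    ∃ p i j s, l = p ++ i :: j :: s ∧ i < j := by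
  rw [List.sortedGE_iff_isChain] at hl
  induction l with
  | nil => exact absurd List.IsChain.nil hl
  | cons x t ih =>
    match t, hl, ih with
    | [], hl, _ => exact absurd (List.IsChain.singleton x) hl
    | y :: t', hl, ih =>
      by_cases hxy : x < y
      · exact ⟨[], x, y, t', rfl, hxy⟩
      · obtain ⟨p, i, j, s, hyt, hij⟩ :=
          ih fun h => hl (List.isChain_cons_cons.mpr ⟨not_lt.mp hxy, h⟩)
        exact ⟨x :: p, i, j, s, by rw [hyt, List.cons_append], hij⟩

end Inversions

section Straightening

variable {I K A : Type*} [LinearOrder I] [Field K] [Ring A] [Algebra K A]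

theorem prod_map_append_cons_cons {a : I → A} {i j : I} {ξ : K} {c : (I →₀ ℕ) →₀ K}
    (hc : a i * a j = ξ • (a j * a i) + c.sum fun v ξv => ξv • ordMon a v) (p s : List I) :
    ((p ++ i :: j :: s).map a).prod = ξ • ((p ++ j :: i :: s).map a).prod +
      c.sum fun v ξv => ξv • ((p ++ wordOf v ++ s).map a).prod := by
  simp only [List.map_append, List.map_cons, List.prod_append, List.prod_cons, prod_map_wordOf]
  calc _ = (p.map a).prod * (a i * a j) * (s.map a).prod := by simp only [mul_assoc]
    _ = _ := by
      rw [hc, mul_add, add_mul, Finsupp.mul_sum, Finsupp.sum_mul]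
      simp only [mul_assoc, smul_mul_assoc, mul_smul_comm]

variable (K) in
def HasStraightening (a : I → A) : Prop :=
  ∀ i j : I, i < j → ∃ ξ : K, ξ ≠ 0 ∧ ∃ c : (I →₀ ℕ) →₀ K,
    a i * a j = ξ • (a j * a i) + c.sum (fun v ξv => ξv • ordMon a v) ∧
    ∀ v, c v ≠ 0 → leadLT v (Finsupp.single i 1 + Finsupp.single j 1)

variable [WellFoundedLT I] {a : I → A} {B : Module.Basis (I →₀ ℕ) K A}

theorem isLead_prod_map (hB : ∀ m, B m = ordMon a m) (hstr : HasStraightening K a)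
    (l : List I) : isLead B (l.map a).prod (Multiset.toFinsupp l) := by
  induction l using (InvImage.wf (fun l : List I =>
      toLex (toColex (Multiset.toFinsupp (l : Multiset I)), invCount l)) wellFounded_lt).induction
    with | _ l ih => ?_
  by_cases hl : l.SortedGE
  · rw [eq_wordOf_of_sortedGE hl, prod_map_wordOf, ← hB, toFinsupp_wordOf]
    exact isLead_self _
  obtain ⟨p, i, j, s, rfl, hij⟩ := exists_eq_append_cons_cons_lt_of_not_sortedGE hl
  obtain ⟨ξ, hξ, c, hc, hc_lt⟩ := hstr i j hij
  set E := Multiset.toFinsupp ((p ++ i :: j :: s : List I) : Multiset I)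
  have hswap : isLead B ((p ++ j :: i :: s).map a).prod E := by
    have hE : Multiset.toFinsupp ((p ++ j :: i :: s : List I) : Multiset I) = E := by
      rw [Multiset.coe_eq_coe.mpr ((List.Perm.swap i j s).append_left p)]
    exact hE ▸ ih _ (Prod.Lex.toLex_lt_toLex.mpr (Or.inr ⟨by rw [hE], invCount_swap p s hij⟩))
  have hlower (v : I →₀ ℕ) (hv : c v ≠ 0) :
      ((p ++ wordOf v ++ s).map a).prod ∈ monomialSpan B (Iio (toColex E)) := by
    have hij_content : Multiset.toFinsupp (([i, j] : List I) : Multiset I) =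
        single i 1 + single j 1 := by
      simpa using toFinsupp_coe_append [i] [j]
    have hlt : toColex (Multiset.toFinsupp ((p ++ wordOf v ++ s : List I) : Multiset I)) <
        toColex E := by
      simpa using toColex_toFinsupp_append_lt p s (w' := [i, j])
        (by rw [toFinsupp_wordOf, hij_content]; exact leadLT_iff_toColex_lt.mp (hc_lt v hv))
    exact (ih _ (Prod.Lex.toLex_lt_toLex.mpr (Or.inl hlt))).mem_monomialSpan_Iio hlt
  rw [prod_map_append_cons_cons hc]
  exact hswap.smul_add hξ
    (Submodule.sum_mem _ fun v hv => Submodule.smul_mem _ _ (hlower v (mem_support_iff.mp hv)))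

theorem isLead_basis_mul_basis (hB : ∀ m, B m = ordMon a m)
    (hstr : HasStraightening K a) (α β : I →₀ ℕ) : isLead B (B α * B β) (α + β) := by
  have h := isLead_prod_map hB hstr (wordOf α ++ wordOf β)
  rwa [List.map_append, List.prod_append, prod_map_wordOf, prod_map_wordOf, ← hB, ← hB,
    toFinsupp_coe_append, toFinsupp_wordOf, toFinsupp_wordOf] at h

end Straightening

theorem multiplication_strictly_preserves_leading_order
    {I K A : Type*} [LinearOrder I] [Field K] [Ring A] [Algebra K A]
    -- `<` on `I` is well founded (no infinite strictly decreasing chains)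
    (hwf : WellFounded ((· < ·) : I → I → Prop))
    (a : I → A)
    -- the ordered monomials form a `K`-basis of `A`
    (B : Module.Basis (I →₀ ℕ) K A) (hB : ∀ m : I →₀ ℕ, B m = ordMon a m)
    -- straightening hypothesis (*)
    (hstr : ∀ i j : I, i < j → ∃ ξ : K, ξ ≠ 0 ∧ ∃ c : (I →₀ ℕ) →₀ K,
      a i * a j = ξ • (a j * a i) + c.sum (fun v ξv => ξv • ordMon a v) ∧
      ∀ v, c v ≠ 0 → leadLT v (Finsupp.single i 1 + Finsupp.single j 1))
    (u : A) (hu : u ≠ 0)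
    (m m' : I →₀ ℕ) (hmm' : leadLT m m') :
    u * ordMon a m ≠ 0 ∧ u * ordMon a m' ≠ 0 ∧
    ordMon a m * u ≠ 0 ∧ ordMon a m' * u ≠ 0 ∧
    (∃ μ μ' : I →₀ ℕ, isLead B (u * ordMon a m) μ ∧
      isLead B (u * ordMon a m') μ' ∧ leadLT μ μ') ∧
    (∃ ν ν' : I →₀ ℕ, isLead B (ordMon a m * u) ν ∧
      isLead B (ordMon a m' * u) ν' ∧ leadLT ν ν') := by
  have : WellFoundedLT I := ⟨hwf⟩
  have hmul := isLead_basis_mul_basis hB hstr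
  obtain ⟨μ, hμ⟩ := exists_isLead (B := B) hu
  have hright (n : I →₀ ℕ) : isLead B (u * ordMon a n) (μ + n) :=
    hμ.mul hmul (hB n ▸ isLead_self n)
  have hleft (n : I →₀ ℕ) : isLead B (ordMon a n * u) (n + μ) :=
    (hB n ▸ isLead_self n).mul hmul hμ
  have hlt := leadLT_iff_toColex_lt.mp hmm'
  refine ⟨(hright m).ne_zero, (hright m').ne_zero, (hleft m).ne_zero, (hleft m').ne_zero,
    ⟨_, _, hright m, hright m', leadLT_iff_toColex_lt.mpr (add_lt_add_right hlt _)⟩,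
    ⟨_, _, hleft m, hleft m', leadLT_iff_toColex_lt.mpr (add_lt_add_left hlt _)⟩⟩
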